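/- arXiv:1211.2368 — 2 statements merged into one kernel-verified Lean document; each statement's English description precedes it below -/
import Mathlib

section
/- Let J(0,n) be the n×n nilpotent Jordan block over ℂ. Then the matrix exp(J(0,n)), whose (i,j)-entry is 1/(j-i)! for j ≥ i and 0 otherwise, satisfies rank(exp(J(0,n)) - I) = n - 1; consequently exp(J(0,n)) is similar to the single Jordan block J(1,n). -/
/-- The `n × n` upper-triangular Jordan block with eigenvalue `a`. -/
def jordanBlock {K : Type*} [Semiring K] (a : K) (n : ℕ) : Matrix (Fin n) (Fin n) K :=
  Matrix.of fun i j => if (j : ℕ) = (i : ℕ) then a else if (j : ℕ) = (i : ℕ) + 1 then 1 else 0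

/-- Similarity of square matrices, allowing different (finite) index types. -/
def Msim {m n : Type*} [Fintype m] [Fintype n] [DecidableEq m] [DecidableEq n]
    {K : Type*} [CommRing K] (A : Matrix m m K) (B : Matrix n n K) : Prop :=
  ∃ (P : Matrix m n K) (Q : Matrix n m K), P * Q = 1 ∧ Q * P = 1 ∧ A = P * B * Q

theorem exp_nilpotent_jordan_block
    (n : ℕ)
    (E : Matrix (Fin n) (Fin n) ℂ)
    (hE : ∀ i j : Fin n, E i j =
      if (i : ℕ) ≤ (j : ℕ) then (((j : ℕ) - (i : ℕ)).factorial : ℂ)⁻¹ else 0) :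
    (E - 1).rank = n - 1 ∧ Msim E (jordanBlock (1 : ℂ) n) := by
  obtain _ | m := n
  · constructor
    · exact Nat.le_zero.mp ((E - 1).rank_le_card_width.trans (by simp))
    · exact ⟨1, 1, by simp, by simp, Subsingleton.elim _ _⟩
  set M := E - 1 with hMdef
  have hM : ∀ i j : Fin (m+1), M i j =
      if (i:ℕ) < (j:ℕ) then (((j:ℕ)-(i:ℕ)).factorial : ℂ)⁻¹ else 0 := by
    intro i j
    rw [hMdef, Matrix.sub_apply, hE, Matrix.one_apply]
    by_cases h1 : i = j
    · subst h1; simp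
    · rw [if_neg h1, sub_zero]
      have h2 : (i:ℕ) ≠ (j:ℕ) := fun e => h1 (Fin.ext e)
      rcases lt_or_ge (i:ℕ) (j:ℕ) with h|h
      · rw [if_pos h.le, if_pos h]
      · rw [if_neg (by omega), if_neg (by omega)]
  -- powers of M
  have hpow : ∀ k, ∀ i j : Fin (m+1),
      ((j:ℕ) < (i:ℕ) + k → (M^k) i j = 0) ∧ ((j:ℕ) = (i:ℕ) + k → (M^k) i j = 1) := by
    intro k
    induction k with
    | zero =>
      intro i j
      constructor
      · intro h; rw [pow_zero, Matrix.one_apply_ne (fun e => by rw [e] at h; omega)]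
      · intro h; rw [pow_zero, show i = j from Fin.ext (by omega), Matrix.one_apply_eq]
    | succ k ih =>
      intro i j
      have hmul : (M^(k+1)) i j = ∑ l, (M^k) i l * M l j := by
        rw [pow_succ, Matrix.mul_apply]
      constructor
      · intro h
        rw [hmul]
        apply Finset.sum_eq_zero
        intro l _
        rcases lt_or_ge (l:ℕ) ((i:ℕ)+k) with hl|hl
        · rw [(ih i l).1 hl, zero_mul]
        · rw [hM l j, if_neg (by omega), mul_zero]
      · intro h
        have hik : (i:ℕ) + k < m + 1 := by omega
        rw [hmul, Finset.sum_eq_single (⟨(i:ℕ)+k, hik⟩ : Fin (m+1))]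
        · have e1 : ((⟨(i:ℕ)+k, hik⟩ : Fin (m+1)) : ℕ) = (i:ℕ)+k := rfl
          rw [(ih i _).2 rfl, hM, if_pos (by rw [e1]; omega)]
          rw [e1]
          have e2 : (j:ℕ) - ((i:ℕ)+k) = 1 := by omega
          rw [e2]
          norm_num
        · intro l _ hne
          rcases lt_or_ge (l:ℕ) ((i:ℕ)+k) with hl|hl
          · rw [(ih i l).1 hl, zero_mul]
          · have hl2 : (i:ℕ)+k < (l:ℕ) :=
              lt_of_le_of_ne hl (fun e => hne (Fin.ext (by simp [← e])))
            rw [hM l j, if_neg (by omega), mul_zero]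
        · intro h'; exact absurd (Finset.mem_univ _) h'
  have hMsup : ∀ i : Fin (m+1), ∀ h : (i:ℕ)+1 < m+1, M i ⟨(i:ℕ)+1, h⟩ = 1 := by
    intro i h
    rw [hM, if_pos (by simp)]
    simp
  -- the conjugating matrix P
  set P : Matrix (Fin (m+1)) (Fin (m+1)) ℂ :=
    Matrix.of (fun i j => (M ^ (m - (j:ℕ))) i (Fin.last m)) with hPdef
  have hPlt : ∀ i j : Fin (m+1), (j:ℕ) < (i:ℕ) → P i j = 0 := by
    intro i j h
    exact (hpow (m - (j:ℕ)) i (Fin.last m)).1 (by simp [Fin.val_last]; omega)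
  have hPdiag : ∀ i : Fin (m+1), P i i = 1 := by
    intro i
    exact (hpow (m - (i:ℕ)) i (Fin.last m)).2 (by simp [Fin.val_last]; omega)
  have hPut : P.BlockTriangular id := by
    intro i j h
    exact hPlt i j h
  have hPdet : P.det = 1 := by
    rw [Matrix.det_of_upperTriangular hPut]
    exact Finset.prod_eq_one (fun i _ => hPdiag i)
  have hPunit : IsUnit P.det := by rw [hPdet]; exact isUnit_one
  -- E * P = P * jordanBlock 1 (m+1)
  have hB : ∀ l j : Fin (m+1), jordanBlock (1:ℂ) (m+1) l j =
      (if (j:ℕ) = (l:ℕ) then 1 else 0) + (if (j:ℕ) = (l:ℕ)+1 then 1 else 0) := by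
    intro l j
    simp only [jordanBlock, Matrix.of_apply]
    split_ifs with h1 h2 <;> first | omega | ring
  have hkey : E * P = P * jordanBlock (1:ℂ) (m+1) := by
    ext i j
    rw [Matrix.mul_apply, Matrix.mul_apply]
    have hEeq : ∀ a b : Fin (m+1), E a b = M a b + (if a = b then 1 else 0) := by
      intro a b
      rw [hMdef, Matrix.sub_apply, Matrix.one_apply]
      ring
    calc ∑ l, E i l * P l j
        = ∑ l, (M i l * P l j + (if i = l then 1 else 0) * P l j) := by
          apply Finset.sum_congr rfl; intro l _; rw [hEeq]; ring
      _ = (∑ l, M i l * P l j) + ∑ l, (if i = l then 1 else 0) * P l j := by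
          rw [Finset.sum_add_distrib]
      _ = (M ^ (m - (j:ℕ) + 1)) i (Fin.last m) + P i j := by
          congr 1
          · rw [pow_succ', Matrix.mul_apply]; rfl
          · simp
      _ = ∑ l, P i l * jordanBlock (1:ℂ) (m+1) l j := by
          have : ∑ l, P i l * jordanBlock (1:ℂ) (m+1) l j
              = (∑ l, P i l * (if (j:ℕ) = (l:ℕ) then 1 else 0))
                + ∑ l, P i l * (if (j:ℕ) = (l:ℕ)+1 then 1 else 0) := by
            rw [← Finset.sum_add_distrib]
            apply Finset.sum_congr rfl; intro l _; rw [hB]; ring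
          rw [this]
          have h1 : (∑ l, P i l * (if (j:ℕ) = (l:ℕ) then 1 else 0)) = P i j := by
            rw [Finset.sum_eq_single j]
            · simp
            · intro l _ hne
              rw [if_neg (fun e => hne (Fin.ext e.symm)), mul_zero]
            · intro h'; exact absurd (Finset.mem_univ _) h'
          rw [h1]
          rcases Nat.eq_zero_or_pos (j:ℕ) with hj | hj
          · have h2 : (∑ l, P i l * (if (j:ℕ) = (l:ℕ)+1 then 1 else 0)) = 0 := by
              apply Finset.sum_eq_zero
              intro l _
              rw [if_neg (by omega), mul_zero]
            have h3 : (M ^ (m - (j:ℕ) + 1)) i (Fin.last m) = 0 := by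
              apply (hpow _ i (Fin.last m)).1
              simp [Fin.val_last]; omega
            rw [h2, h3]; ring
          · have hj1 : (j:ℕ) - 1 < m + 1 := by omega
            have h2 : (∑ l, P i l * (if (j:ℕ) = (l:ℕ)+1 then 1 else 0))
                = P i ⟨(j:ℕ)-1, hj1⟩ := by
              rw [Finset.sum_eq_single (⟨(j:ℕ)-1, hj1⟩ : Fin (m+1))]
              · rw [if_pos (by simp; omega), mul_one]
              · intro l _ hne
                rw [if_neg (fun e => hne (Fin.ext (by simp; omega))), mul_zero]
              · intro h'; exact absurd (Finset.mem_univ _) h'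
            rw [h2]
            have h3 : m - ((j:ℕ) - 1) = m - (j:ℕ) + 1 := by
              have := j.isLt; omega
            simp only [hPdef, Matrix.of_apply, h3]
            ring
  refine ⟨?_, P, P⁻¹, Matrix.mul_nonsing_inv P hPunit, Matrix.nonsing_inv_mul P hPunit, ?_⟩
  · -- rank part
    -- upper bound : M = C * D
    have hrank_le : M.rank ≤ m := by
      set C : Matrix (Fin (m+1)) (Fin m) ℂ := Matrix.of (fun i k => M i k.succ) with hC
      set D : Matrix (Fin m) (Fin (m+1)) ℂ :=
        Matrix.of (fun k j => if (j:ℕ) = (k:ℕ)+1 then 1 else 0) with hD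
      have hMCD : M = C * D := by
        ext i j
        rw [Matrix.mul_apply]
        rcases Nat.eq_zero_or_pos (j:ℕ) with hj | hj
        · rw [hM, if_neg (by omega)]
          symm; apply Finset.sum_eq_zero
          intro k _
          simp only [hD, Matrix.of_apply]
          rw [if_neg (by omega), mul_zero]
        · have hj1 : (j:ℕ) - 1 < m := by have := j.isLt; omega
          rw [Finset.sum_eq_single (⟨(j:ℕ)-1, hj1⟩ : Fin m)]
          · simp only [hC, hD, Matrix.of_apply]
            have e1 : ((⟨(j:ℕ)-1, hj1⟩ : Fin m) : ℕ) = (j:ℕ)-1 := rfl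
            rw [if_pos (by omega), mul_one]
            congr 1
            apply Fin.ext
            simp only [Fin.val_succ]
            omega
          · intro k _ hne
            simp only [hD, Matrix.of_apply]
            rw [if_neg (fun e => hne (Fin.ext (by simp; omega))), mul_zero]
          · intro h'; exact absurd (Finset.mem_univ _) h'
      calc M.rank = (C * D).rank := by rw [hMCD]
        _ ≤ C.rank := Matrix.rank_mul_le_left C D
        _ ≤ Fintype.card (Fin m) := C.rank_le_card_width
        _ = m := by simp
    have hrank_ge : m ≤ M.rank := by
      set L : Matrix (Fin m) (Fin (m+1)) ℂ :=
        Matrix.of (fun k i => if (i:ℕ) = (k:ℕ) then 1 else 0) with hL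
      set R : Matrix (Fin (m+1)) (Fin m) ℂ :=
        Matrix.of (fun j l => if (j:ℕ) = (l:ℕ)+1 then 1 else 0) with hR
      set T : Matrix (Fin m) (Fin m) ℂ :=
        Matrix.of (fun k l => M k.castSucc l.succ) with hT
      have hTLMR : T = L * M * R := by
        ext k l
        rw [Matrix.mul_apply]
        rw [Finset.sum_eq_single (Fin.succ l)]
        · rw [Matrix.mul_apply, Finset.sum_eq_single (Fin.castSucc k)]
          · simp only [hL, hR, hT, Matrix.of_apply]
            rw [if_pos (by simp), if_pos (by simp), one_mul, mul_one]
          · intro i _ hne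
            simp only [hL, Matrix.of_apply]
            rw [if_neg (fun e => hne (Fin.ext (by simp; omega))), zero_mul]
          · intro h'; exact absurd (Finset.mem_univ _) h'
        · intro jj _ hne
          simp only [hR, Matrix.of_apply]
          rw [if_neg (fun e => hne (Fin.ext (by simp; omega))), mul_zero]
        · intro h'; exact absurd (Finset.mem_univ _) h'
      have hTut : T.BlockTriangular id := by
        intro k l h
        simp only [hT, Matrix.of_apply]
        have hlk : (l:ℕ) < (k:ℕ) := h
        rw [hM, if_neg (by simp only [Fin.coe_castSucc, Fin.val_succ]; omega)]
      have hTdiag : ∀ k : Fin m, T k k = 1 := by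
        intro k
        simp only [hT, Matrix.of_apply]
        rw [hM, if_pos (by simp)]
        simp
      have hTdet : T.det = 1 := by
        rw [Matrix.det_of_upperTriangular hTut]
        exact Finset.prod_eq_one (fun k _ => hTdiag k)
      have hTunit : IsUnit T := by
        rw [Matrix.isUnit_iff_isUnit_det, hTdet]; exact isUnit_one
      have hTrank : T.rank = m := by
        rw [Matrix.rank_of_isUnit T hTunit]; simp
      calc m = T.rank := hTrank.symm
        _ = (L * M * R).rank := by rw [hTLMR]
        _ ≤ (L * M).rank := Matrix.rank_mul_le_left _ _
        _ ≤ M.rank := Matrix.rank_mul_le_right _ _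
    have hh : M.rank = m := le_antisymm hrank_le hrank_ge
    rw [hh]
    omega
  · -- similarity
    calc E = E * (P * P⁻¹) := by rw [Matrix.mul_nonsing_inv P hPunit, mul_one]
      _ = (E * P) * P⁻¹ := by rw [mul_assoc]
      _ = P * jordanBlock (1:ℂ) (m+1) * P⁻¹ := by rw [hkey]
end

section
/- Let r_1, ..., r_t be positive integers, n = -t + ∑_j r_j, and let c_k be defined by ∏_{j=1}^t (1 + x + ... + x^{r_j-1}) = ∑_{k=0}^n c_k x^k. Then the coefficients are symmetric, c_k = c_{n-k} for all 0 ≤ k ≤ n, and unimodal in the sense that c_{k-1} ≤ c_k for all 0 ≤ k ≤ ⌊n/2⌋ (with c_{-1} = 0). -/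
open Polynomial Finset

lemma coeff_qnum (m j : ℕ) : (∑ l ∈ range m, (X : Polynomial ℕ)^l).coeff j = if j < m then 1 else 0 := by
  rw [Polynomial.finset_sum_coeff]
  simp only [Polynomial.coeff_X_pow]
  rw [Finset.sum_ite_eq (range m) j fun _ => (1:ℕ)]
  simp

lemma coeff_qnum_mul (m : ℕ) (q : Polynomial ℕ) (k : ℕ) :
    ((∑ l ∈ range m, (X : Polynomial ℕ)^l) * q).coeff k
      = ∑ i ∈ Icc (k+1-m) k, q.coeff i := by
  rw [Polynomial.coeff_mul, Finset.Nat.sum_antidiagonal_eq_sum_range_succ_mk]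
  calc ∑ j ∈ range (k+1), (∑ l ∈ range m, (X : Polynomial ℕ)^l).coeff j * q.coeff (k - j)
      = ∑ j ∈ range (k+1), if j < m then q.coeff (k-j) else 0 := by
        refine Finset.sum_congr rfl fun j hj => ?_
        rw [coeff_qnum]; split <;> simp
    _ = ∑ j ∈ (range (k+1)).filter (· < m), q.coeff (k-j) := by
        rw [Finset.sum_filter]
    _ = ∑ i ∈ Icc (k+1-m) k, q.coeff i := by
        refine Finset.sum_nbij' (i := fun j => k - j) (j := fun i => k - i) ?_ ?_ ?_ ?_ ?_
        · intro a ha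
          simp only [Finset.mem_filter, Finset.mem_range] at ha
          simp only [Finset.mem_Icc]; omega
        · intro a ha
          simp only [Finset.mem_Icc] at ha
          simp only [Finset.mem_filter, Finset.mem_range]; omega
        · intro a ha
          simp only [Finset.mem_filter, Finset.mem_range] at ha
          show k - (k - a) = a; omega
        · intro a ha
          simp only [Finset.mem_Icc] at ha
          show k - (k - a) = a; omega
        · intro a ha; rfl

lemma sym_step_mono (f : ℕ → ℕ) (n : ℕ)
    (hsym : ∀ k ≤ n, f k = f (n-k))
    (hstep : ∀ k, 1 ≤ k → 2*k ≤ n → f (k-1) ≤ f k) :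
    ∀ a b, a ≤ b → a + b ≤ n → f a ≤ f b := by
  have aux : ∀ b a, a ≤ b → 2*b ≤ n → f a ≤ f b := by
    intro b
    induction b with
    | zero =>
      intro a ha _
      have : a = 0 := by omega
      simp [this]
    | succ b ih =>
      intro a ha hb
      rcases Nat.eq_or_lt_of_le ha with h | h
      · rw [h]
      · refine le_trans (ih a (by omega) (by omega)) ?_
        have := hstep (b+1) (by omega) hb
        simpa using this
  intro a b hab habn
  by_cases hb : 2*b ≤ n
  · exact aux b a hab hb
  · have hbn : b ≤ n := by omega
    rw [hsym b hbn]
    exact aux (n-b) a (by omega) (by omega)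

lemma conv_props (g : ℕ → ℕ) (n m : ℕ) (hm : 1 ≤ m)
    (h0 : ∀ k, n < k → g k = 0)
    (hsym : ∀ k ≤ n, g k = g (n - k))
    (hmono : ∀ a b, a ≤ b → a + b ≤ n → g a ≤ g b) :
    (∀ k, n+m-1 < k → (∑ i ∈ Icc (k+1-m) k, g i) = 0) ∧
    (∀ k ≤ n+m-1, (∑ i ∈ Icc (k+1-m) k, g i)
        = ∑ i ∈ Icc ((n+m-1-k)+1-m) (n+m-1-k), g i) ∧
    (∀ a b, a ≤ b → a+b ≤ n+m-1 →
      (∑ i ∈ Icc (a+1-m) a, g i) ≤ ∑ i ∈ Icc (b+1-m) b, g i) := by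
  have hvan : ∀ k, n+m-1 < k → (∑ i ∈ Icc (k+1-m) k, g i) = 0 := by
    intro k hk
    apply Finset.sum_eq_zero
    intro i hi
    simp only [Finset.mem_Icc] at hi
    exact h0 i (by omega)
  have reduce : ∀ a b : ℕ, ∑ i ∈ Icc a b, g i = ∑ i ∈ Icc a (min b n), g i := by
    intro a b
    rw [eq_comm]
    apply Finset.sum_subset
    · intro x hx
      simp only [Finset.mem_Icc] at *
      omega
    · intro x hx hnx
      simp only [Finset.mem_Icc] at hx hnx
      exact h0 x (by omega)
  have hsymm : ∀ k ≤ n+m-1, (∑ i ∈ Icc (k+1-m) k, g i)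
      = ∑ i ∈ Icc ((n+m-1-k)+1-m) (n+m-1-k), g i := by
    intro k hk
    rw [reduce (k+1-m) k, reduce ((n+m-1-k)+1-m) (n+m-1-k)]
    refine Finset.sum_nbij' (i := fun i => n - i) (j := fun i => n - i) ?_ ?_ ?_ ?_ ?_
    · intro a ha
      simp only [Finset.mem_Icc] at *
      omega
    · intro a ha
      simp only [Finset.mem_Icc] at *
      omega
    · intro a ha
      simp only [Finset.mem_Icc] at ha
      show n - (n - a) = a
      omega
    · intro a ha
      simp only [Finset.mem_Icc] at ha
      show n - (n - a) = a
      omega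
    · intro a ha
      simp only [Finset.mem_Icc] at ha
      exact hsym a (by omega)
  refine ⟨hvan, hsymm, ?_⟩
  apply sym_step_mono (fun k => ∑ i ∈ Icc (k+1-m) k, g i) (n+m-1) hsymm
  intro k hk1 hk2
  obtain ⟨k', rfl⟩ : ∃ k', k = k'+1 := ⟨k-1, by omega⟩
  simp only [Nat.add_sub_cancel]
  by_cases hmk : m ≤ k'+1
  · have e1 : ∑ i ∈ Icc (k'+1-m) k', g i
        = g (k'+1-m) + ∑ i ∈ Ioc (k'+1-m) k', g i := by
      rw [Finset.Icc_eq_cons_Ioc (by omega), Finset.sum_cons]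
    have e2 : ∑ i ∈ Icc (k'+1+1-m) (k'+1), g i
        = (∑ i ∈ Ioc (k'+1-m) k', g i) + g (k'+1) := by
      rw [show k'+1 = k'+1 from rfl, Finset.sum_Icc_succ_top (by omega)]
      congr 1
      rw [show k'+1+1-m = (k'+1-m)+1 by omega, Finset.Icc_add_one_left_eq_Ioc]
    rw [e1, e2]
    have : g (k'+1-m) ≤ g (k'+1) := hmono _ _ (by omega) (by omega)
    omega
  · rw [show k'+1-m = 0 by omega, show k'+1+1-m = 0 by omega,
      Finset.sum_Icc_succ_top (by omega)]
    exact Nat.le_add_right _ _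

lemma prod_props (t : ℕ) (r : Fin t → ℕ) (hr : ∀ j, 0 < r j) :
    (∀ k, (∑ j, r j) - t < k →
      (∏ j, ∑ l ∈ Finset.range (r j), (X : Polynomial ℕ)^l).coeff k = 0) ∧
    (∀ k ≤ (∑ j, r j) - t,
      (∏ j, ∑ l ∈ Finset.range (r j), (X : Polynomial ℕ)^l).coeff k
        = (∏ j, ∑ l ∈ Finset.range (r j), (X : Polynomial ℕ)^l).coeff ((∑ j, r j) - t - k)) ∧
    (∀ a b, a ≤ b → a + b ≤ (∑ j, r j) - t →
      (∏ j, ∑ l ∈ Finset.range (r j), (X : Polynomial ℕ)^l).coeff a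
        ≤ (∏ j, ∑ l ∈ Finset.range (r j), (X : Polynomial ℕ)^l).coeff b) := by
  induction t with
  | zero =>
    refine ⟨?_, ?_, ?_⟩
    · intro k hk
      simp only [Finset.univ_eq_empty, Finset.sum_empty] at hk
      simp only [Finset.univ_eq_empty, Finset.prod_empty, Polynomial.coeff_one]
      simp only [ite_eq_right_iff]
      omega
    · intro k hk
      simp only [Finset.univ_eq_empty, Finset.sum_empty] at hk
      have : k = 0 := by omega
      simp [this]
    · intro a b hab habn
      simp only [Finset.univ_eq_empty, Finset.sum_empty] at habn
      have ha : a = 0 := by omega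
      have hb : b = 0 := by omega
      simp [ha, hb]
  | succ t ih =>
    set m := r 0 with hm0
    have hm : 1 ≤ m := hr 0
    obtain ⟨van, sym, mono⟩ := ih (fun j => r j.succ) (fun j => hr j.succ)
    set P := ∏ j : Fin t, ∑ l ∈ Finset.range (r j.succ), (X : Polynomial ℕ)^l with hP
    set n' := (∑ j : Fin t, r j.succ) - t with hn'
    have ht : t ≤ ∑ j : Fin t, r j.succ := by
      have := Finset.card_nsmul_le_sum Finset.univ (fun j => r (Fin.succ j)) 1
        (fun j _ => hr j.succ)
      simpa using this
    have hsum : ∑ j : Fin (t+1), r j = m + ∑ j : Fin t, r j.succ := by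
      rw [Fin.sum_univ_succ]
    have hN : (∑ j : Fin (t+1), r j) - (t+1) = n' + m - 1 := by
      rw [hsum]; omega
    have hprod : (∏ j : Fin (t+1), ∑ l ∈ Finset.range (r j), (X : Polynomial ℕ)^l)
        = (∑ l ∈ Finset.range m, (X : Polynomial ℕ)^l) * P := by
      rw [Fin.prod_univ_succ]
    have hcoeff : ∀ k, (∏ j : Fin (t+1), ∑ l ∈ Finset.range (r j), (X : Polynomial ℕ)^l).coeff k
        = ∑ i ∈ Icc (k+1-m) k, P.coeff i := by
      intro k
      rw [hprod, coeff_qnum_mul]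
    obtain ⟨cvan, csym, cmono⟩ := conv_props P.coeff n' m hm van sym mono
    refine ⟨?_, ?_, ?_⟩
    · intro k hk
      rw [hcoeff]
      exact cvan k (by omega)
    · intro k hk
      rw [hcoeff, hcoeff, hN]
      have := csym k (by omega)
      rw [this]
    · intro a b hab habn
      rw [hcoeff, hcoeff]
      exact cmono a b hab (by omega)

theorem product_of_qnumbers_symmetric_unimodal
    (t : ℕ) (r : Fin t → ℕ) (hr : ∀ j, 0 < r j)
    (n : ℕ) (hn : (n : ℤ) = -(t : ℤ) + ∑ j, (r j : ℤ))
    (c : ℕ → ℕ)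
    (hc : ∀ k, c k =
      (∏ j, ∑ l ∈ Finset.range (r j), (Polynomial.X : Polynomial ℕ) ^ l).coeff k) :
    (∀ k ≤ n, c k = c (n - k)) ∧
    (∀ k, 2 * k ≤ n → (if k = 0 then 0 else c (k - 1)) ≤ c k) := by
  obtain ⟨van, sym, mono⟩ := prod_props t r hr
  have ht : t ≤ ∑ j, r j := by
    have := Finset.card_nsmul_le_sum Finset.univ r 1 (fun j _ => hr j)
    simpa using this
  have hsum : ((∑ j, r j : ℕ) : ℤ) = ∑ j, (r j : ℤ) := by push_cast; rfl
  have hnn : n = (∑ j, r j) - t := by omega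
  subst hnn
  constructor
  · intro k hk
    rw [hc, hc]
    exact sym k hk
  · intro k hk
    split
    · exact Nat.zero_le _
    · rw [hc, hc]
      exact mono (k-1) k (by omega) (by omega)
end
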